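/- arXiv:2104.06549 — 2 statements merged into one kernel-verified Lean document; each statement's English description precedes it below -/
import Mathlib

section
/- Let U : ℝⁿ → ℝ be a C² nonnegative function, p ∈ ℝⁿ with U(p) = 0, v ∈ ℝⁿ, and T > 0. For each ε > 0 let x_ε : ℝ → ℝⁿ be the (global) solution of ẍ = −ε⁻²∇U(x) with x_ε(0) = p and ẋ_ε(0) = v. Then there exist a sequence (ε_j) of positive numbers with ε_j → 0 and a continuous curve x : [−T,T] → ℝⁿ with x(0) = p such that x_{ε_j} → x uniformly on [−T,T] and U(x(t)) = 0 for every t ∈ [−T,T]. -/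
/-! Along a solution of `ẍ = -c ∇U(x)` the energy `‖ẋ‖² + 2cU(x)` is conserved. For a solution
starting at a zero of `U ≥ 0` with velocity `v`, this bounds the speed by `‖v‖`, so the curves
`x_ε` are uniformly `‖v‖`-Lipschitz and Arzelà–Ascoli extracts a uniformly convergent
subsequence; it also bounds `U(x_ε(t))` by `ε²‖v‖²/2`, which forces `U = 0` on the limit. -/

open Set Filter

open scoped NNReal Topology BoundedContinuousFunction

section Energy

variable {F : Type*} [NormedAddCommGroup F] [InnerProductSpace ℝ F] [CompleteSpace F]
  {U : F → ℝ} {c : ℝ} {x x' : ℝ → F}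

theorem hasDerivAt_energy_eq_zero (hU : Differentiable ℝ U)
    (hx : ∀ t, HasDerivAt x (x' t) t) (hx' : ∀ t, HasDerivAt x' (-c • gradient U (x t)) t)
    (t : ℝ) : HasDerivAt (fun s ↦ ‖x' s‖ ^ 2 + 2 * c * U (x s)) 0 t := by
  have hUx : HasDerivAt (fun s ↦ U (x s)) (inner ℝ (gradient U (x t)) (x' t)) t :=
    (hU (x t)).hasGradientAt.hasFDerivAt.comp_hasDerivAt t (hx t)
  refine ((hx' t).norm_sq.add (hUx.const_mul (2 * c))).congr_deriv ?_
  rw [inner_smul_right, real_inner_comm]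
  ring

theorem energy_conservation (hU : Differentiable ℝ U)
    (hx : ∀ t, HasDerivAt x (x' t) t) (hx' : ∀ t, HasDerivAt x' (-c • gradient U (x t)) t)
    (t : ℝ) : ‖x' t‖ ^ 2 + 2 * c * U (x t) = ‖x' 0‖ ^ 2 + 2 * c * U (x 0) :=
  is_const_of_deriv_eq_zero (fun s ↦ (hasDerivAt_energy_eq_zero hU hx hx' s).differentiableAt)
    (fun s ↦ (hasDerivAt_energy_eq_zero hU hx hx' s).deriv) t 0

theorem two_mul_potential_le_sq_norm_initial_velocity (hU : Differentiable ℝ U)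
    (hx : ∀ t, HasDerivAt x (x' t) t) (hx' : ∀ t, HasDerivAt x' (-c • gradient U (x t)) t)
    (hUx0 : U (x 0) = 0) (t : ℝ) : 2 * c * U (x t) ≤ ‖x' 0‖ ^ 2 := by
  have := energy_conservation hU hx hx' t
  rw [hUx0] at this
  nlinarith [sq_nonneg ‖x' t‖]

theorem norm_velocity_le_norm_initial_velocity (hU : Differentiable ℝ U) (hU0 : ∀ y, 0 ≤ U y)
    (hc : 0 ≤ c) (hx : ∀ t, HasDerivAt x (x' t) t)
    (hx' : ∀ t, HasDerivAt x' (-c • gradient U (x t)) t) (hUx0 : U (x 0) = 0) (t : ℝ) :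
    ‖x' t‖ ≤ ‖x' 0‖ := by
  have := energy_conservation hU hx hx' t
  rw [hUx0] at this
  have : ‖x' t‖ ^ 2 ≤ ‖x' 0‖ ^ 2 := by nlinarith [mul_nonneg hc (hU0 (x t))]
  exact pow_le_pow_iff_left₀ (norm_nonneg _) (norm_nonneg _) two_ne_zero |>.mp this

theorem lipschitzWith_nnnorm_initial_velocity (hU : Differentiable ℝ U) (hU0 : ∀ y, 0 ≤ U y)
    (hc : 0 ≤ c) (hx : ∀ t, HasDerivAt x (x' t) t)
    (hx' : ∀ t, HasDerivAt x' (-c • gradient U (x t)) t) (hUx0 : U (x 0) = 0) :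
    LipschitzWith ‖x' 0‖₊ x :=
  lipschitzWith_of_nnnorm_deriv_le (fun t ↦ (hx t).differentiableAt) fun t ↦ by
    rw [(hx t).deriv, ← NNReal.coe_le_coe, coe_nnnorm, coe_nnnorm]
    exact norm_velocity_le_norm_initial_velocity hU hU0 hc hx hx' hUx0 t

end Energy

theorem exists_subseq_tendstoUniformlyOn_of_lipschitzOnWith
    {α β : Type*} [PseudoMetricSpace α] [MetricSpace β] {s : Set α} (hs : IsCompact s)
    {k : Set β} (hk : IsCompact k) {K : ℝ≥0} {f : ℕ → α → β}
    (hf : ∀ j, LipschitzOnWith K (f j) s) (hfk : ∀ j, MapsTo (f j) s k) :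
    ∃ (φ : ℕ → ℕ) (g : α → β), StrictMono φ ∧ ContinuousOn g s ∧
      TendstoUniformlyOn (fun j ↦ f (φ j)) g atTop s := by
  classical
  have : CompactSpace s := isCompact_iff_compactSpace.mp hs
  let F : ℕ → s →ᵇ β := fun j ↦
    .mkOfCompact ⟨s.domRestrict (f j), (hf j).continuousOn.domRestrict⟩
  have hF : IsCompact (closure (range F)) := by
    refine BoundedContinuousFunction.arzela_ascoli k hk _ ?_ ?_
    · rintro _ t ⟨j, rfl⟩
      exact hfk j t.2
    · refine Metric.equicontinuous_of_continuity_modulus (fun d ↦ K * d) ?_ _ ?_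
      · simpa using (tendsto_id (x := 𝓝 (0 : ℝ))).const_mul (K : ℝ)
      · rintro t u ⟨_, j, rfl⟩
        exact (hf j).dist_le_mul t t.2 u u.2
  obtain ⟨G, -, φ, hφ, hG⟩ := hF.tendsto_subseq fun j ↦ subset_closure (mem_range_self j)
  let g : α → β := fun t ↦ if ht : t ∈ s then G ⟨t, ht⟩ else f 0 t
  have hgG : ∀ t : s, g t = G t := fun t ↦ dif_pos t.2
  refine ⟨φ, g, hφ, ?_, ?_⟩
  · rw [continuousOn_iff_continuous_domRestrict]
    exact G.continuous.congr fun t ↦ (hgG t).symm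
  · rw [tendstoUniformlyOn_iff_tendstoUniformly_comp_coe]
    convert BoundedContinuousFunction.tendsto_iff_tendstoUniformly.mp hG using 1
    · rfl
    · exact funext hgG

/-- **Arzelà–Ascoli extraction of a limit curve confined to the constraint.**
Let `U ≥ 0` be `C²` with `U p = 0`, and for every `ε > 0` let `x ε` be the
global solution of `ẍ = −ε⁻²∇U(x)` with `x ε 0 = p`, `ẋ ε 0 = v`. Then for
every `T > 0` there are positive `ε j → 0` and a continuous curve
`y : [−T,T] → ℝⁿ` with `y 0 = p` such that `x (ε j) → y` uniformly on
`[−T,T]` and `U (y t) = 0` on `[−T,T]`. -/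
theorem limit_curve_on_constraint
    {n : ℕ} (U : EuclideanSpace ℝ (Fin n) → ℝ)
    (hU : ContDiff ℝ 2 U) (hUnonneg : ∀ y, 0 ≤ U y)
    (p v : EuclideanSpace ℝ (Fin n)) (hUp : U p = 0)
    (T : ℝ) (hT : 0 < T)
    (x x' : ℝ → ℝ → EuclideanSpace ℝ (Fin n))
    (hx0 : ∀ ε > (0:ℝ), x ε 0 = p) (hx'0 : ∀ ε > (0:ℝ), x' ε 0 = v)
    (hderiv : ∀ ε > (0:ℝ), ∀ t : ℝ, HasDerivAt (x ε) (x' ε t) t)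
    (hderiv' : ∀ ε > (0:ℝ), ∀ t : ℝ,
      HasDerivAt (x' ε) (-(ε^2)⁻¹ • gradient U (x ε t)) t) :
    ∃ (εseq : ℕ → ℝ) (y : ℝ → EuclideanSpace ℝ (Fin n)),
      (∀ j, 0 < εseq j) ∧
      Tendsto εseq atTop (nhds 0) ∧
      y 0 = p ∧
      ContinuousOn y (Icc (-T) T) ∧
      TendstoUniformlyOn (fun j => x (εseq j)) y atTop (Icc (-T) T) ∧
      (∀ t ∈ Icc (-T) T, U (y t) = 0) := by
  have hUdiff : Differentiable ℝ U := hU.differentiable (by norm_num)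
  have hUx0 : ∀ ε > (0:ℝ), U (x ε 0) = 0 := fun ε hε ↦ by rw [hx0 ε hε, hUp]
  have hlip : ∀ ε > (0:ℝ), LipschitzWith ‖v‖₊ (x ε) := fun ε hε ↦ by
    simpa only [hx'0 ε hε] using lipschitzWith_nnnorm_initial_velocity hUdiff hUnonneg
      (by positivity) (hderiv ε hε) (hderiv' ε hε) (hUx0 ε hε)
  have hball : ∀ ε > (0:ℝ), MapsTo (x ε) (Icc (-T) T) (Metric.closedBall p (‖v‖₊ * T)) :=
    fun ε hε ↦ by
      simpa only [← Real.closedBall_zero_eq_Icc, hx0 ε hε] using (hlip ε hε).mapsTo_closedBall 0 T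
  have hpot : ∀ ε > (0:ℝ), ∀ t, U (x ε t) ≤ ε ^ 2 * ‖v‖ ^ 2 / 2 := fun ε hε t ↦ by
    have := two_mul_potential_le_sq_norm_initial_velocity hUdiff (hderiv ε hε) (hderiv' ε hε)
      (hUx0 ε hε) t
    rw [hx'0 ε hε] at this
    rw [le_div_iff₀ two_pos, ← inv_mul_le_iff₀ (by positivity)]
    linarith
  set ε : ℕ → ℝ := fun j ↦ 1 / (j + 1)
  have hεpos : ∀ j, 0 < ε j := fun j ↦ by positivity
  obtain ⟨φ, y, hφ, hy, hconv⟩ := exists_subseq_tendstoUniformlyOn_of_lipschitzOnWith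
    isCompact_Icc (isCompact_closedBall p (‖v‖₊ * T))
    (fun j ↦ (hlip _ (hεpos j)).lipschitzOnWith) (fun j ↦ hball _ (hεpos j))
  have hεφ : Tendsto (ε ∘ φ) atTop (𝓝 0) :=
    tendsto_one_div_add_atTop_nhds_zero_nat.comp hφ.tendsto_atTop
  refine ⟨ε ∘ φ, y, fun j ↦ hεpos _, hεφ, ?_, hy, hconv, fun t ht ↦ ?_⟩
  · have h0 : (0:ℝ) ∈ Icc (-T) T := ⟨by linarith, hT.le⟩
    refine tendsto_nhds_unique (hconv.tendsto_at h0) ?_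
    simp only [hx0 _ (hεpos _), tendsto_const_nhds]
  · refine tendsto_nhds_unique ((hU.continuous.tendsto _).comp (hconv.tendsto_at ht))
      (squeeze_zero (fun j ↦ hUnonneg _) (fun j ↦ hpot _ (hεpos _) t) ?_)
    simpa using ((hεφ.pow 2).mul_const (‖v‖ ^ 2)).div_const 2
end

section
/- Let f : ℝⁿ → ℝ be C² and let x₀ ∈ ℝⁿ with ∇f(x₀) ≠ 0. Let T(x) = ∇f(x)/‖∇f(x)‖, defined on the open set where ∇f ≠ 0, and let w = ∇(log ‖∇f‖)(x₀) (which exists since f is C² and ∇f(x₀) ≠ 0). Then the directional derivative of the map T at x₀ in the direction T(x₀) equals w − ⟨w, T(x₀)⟩ T(x₀), i.e. the curvature vector of the gradient flow line of f through x₀ (the equipotential distortion κ at x₀) equals the component of ∇(log ‖∇f‖)(x₀) orthogonal to ∇f(x₀). -/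
open Set Filter
open scoped RealInnerProductSpace

/-!
Write `g = ∇f` and `H = Dg(x₀)`, the Hessian of `f`, which is symmetric since `f` is `C²`.
Differentiating `T = g / ‖g‖` in a direction `v` gives `DT(v) = P (H v) / ‖g‖`, where `P` is the
orthogonal projection onto `g(x₀)^⊥`, while `∇ log ‖g‖ = H g / ‖g‖²` because `H` is symmetric.
At `v = T(x₀)` the vector `H v / ‖g‖` is exactly `H g / ‖g‖² = w`, so `DT(T) = P w`.
-/

section InvNormSMul

variable {E F : Type*} [NormedAddCommGroup E] [InnerProductSpace ℝ E]
  [NormedAddCommGroup F] [InnerProductSpace ℝ F] {g : E → F} {G : E →L[ℝ] F} {x : E}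

theorem HasFDerivAt.norm (hg : HasFDerivAt g G x) (hx : g x ≠ 0) :
    HasFDerivAt (fun y => ‖g y‖) (‖g x‖⁻¹ • (innerSL ℝ (g x)).comp G) x := by
  have hsq : ‖g x‖ ^ 2 ≠ 0 := by positivity
  convert hg.norm_sq.sqrt hsq using 1
  · simp only [Real.sqrt_sq (norm_nonneg _)]
  · rw [Real.sqrt_sq (norm_nonneg _), two_smul, ← two_smul ℝ, smul_smul]
    congr 1
    field_simp

theorem HasFDerivAt.log_norm (hg : HasFDerivAt g G x) (hx : g x ≠ 0) :
    HasFDerivAt (fun y => Real.log ‖g y‖) ((‖g x‖ ^ 2)⁻¹ • (innerSL ℝ (g x)).comp G) x := by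
  convert (hg.norm hx).log (norm_ne_zero_iff.2 hx) using 1
  rw [smul_smul, pow_two, mul_inv]

theorem HasFDerivAt.hasLineDerivAt_inv_norm_smul (hg : HasFDerivAt g G x) (hx : g x ≠ 0)
    (v : E) :
    HasLineDerivAt ℝ (fun y => ‖g y‖⁻¹ • g y)
      (‖g x‖⁻¹ • G v - ⟪‖g x‖⁻¹ • G v, ‖g x‖⁻¹ • g x⟫ • (‖g x‖⁻¹ • g x)) x v := by
  have hinv : HasFDerivAt (fun y => ‖g y‖⁻¹)
      (-(‖g x‖ ^ 2)⁻¹ • ‖g x‖⁻¹ • (innerSL ℝ (g x)).comp G) x :=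
    (hasDerivAt_inv (norm_ne_zero_iff.2 hx)).comp_hasFDerivAt x (hg.norm hx)
  have hT : HasFDerivAt (fun y => ‖g y‖⁻¹ • g y) _ x := hinv.smul hg
  convert hT.hasLineDerivAt v using 1
  simp only [add_apply, smul_apply, ContinuousLinearMap.smulRight_apply,
    ContinuousLinearMap.comp_apply, innerSL_apply_apply, real_inner_smul_left,
    real_inner_smul_right, smul_eq_mul]
  rw [real_inner_comm (G v)]
  match_scalars
  · ring
  · field_simp

end InvNormSMul

section Gradient

open InnerProductSpace

variable {E : Type*} [NormedAddCommGroup E] [InnerProductSpace ℝ E] [CompleteSpace E] {x : E}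

theorem HasFDerivAt.hasGradientAt_log_norm {g : E → E} {G : E →L[ℝ] E}
    (hg : HasFDerivAt g G x) (hG : (G : E →ₗ[ℝ] E).IsSymmetric) (hx : g x ≠ 0) :
    HasGradientAt (fun y => Real.log ‖g y‖) ((‖g x‖ ^ 2)⁻¹ • G (g x)) x := by
  refine (hg.log_norm hx).congr_fderiv ?_
  ext u
  simp only [smul_apply, ContinuousLinearMap.comp_apply, innerSL_apply_apply,
    toDual_apply_apply, real_inner_smul_left]
  rw [← ContinuousLinearMap.coe_coe G, hG, smul_eq_mul]

variable {f : E → ℝ}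

theorem differentiableAt_gradient_iff :
    DifferentiableAt ℝ (gradient f) x ↔ DifferentiableAt ℝ (fderiv ℝ f) x :=
  (toDual ℝ E).symm.comp_differentiableAt_iff

theorem fderiv_gradient_apply (u : E) :
    fderiv ℝ (gradient f) x u = (toDual ℝ E).symm (fderiv ℝ (fderiv ℝ f) x u) :=
  congrArg (· u) ((toDual ℝ E).symm.comp_fderiv (f := fderiv ℝ f))

theorem ContDiffAt.differentiableAt_gradient (hf : ContDiffAt ℝ 2 f x) :
    DifferentiableAt ℝ (gradient f) x :=
  differentiableAt_gradient_iff.2 <|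
    (hf.fderiv_right (m := 1) le_rfl).differentiableAt one_ne_zero

theorem ContDiffAt.isSymmetric_fderiv_gradient (hf : ContDiffAt ℝ 2 f x) :
    ((fderiv ℝ (gradient f) x : E →L[ℝ] E) : E →ₗ[ℝ] E).IsSymmetric := by
  intro u v
  rw [ContinuousLinearMap.coe_coe, fderiv_gradient_apply, fderiv_gradient_apply,
    real_inner_comm _ u, toDual_symm_apply, toDual_symm_apply]
  exact hf.isSymmSndFDerivAt (by simp) u v

end Gradient

/-- **The equipotential distortion (curvature of gradient flow lines) is the
tangential component of `∇ log ‖∇f‖`.**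
Let `f` be `C²` with `∇f(x₀) ≠ 0`, let `T = ∇f/‖∇f‖` be the unit gradient
field near `x₀`, and let `w = ∇(log ‖∇f‖)(x₀)`. Then the directional
derivative of `T` at `x₀` in the direction `T x₀` equals
`w − ⟨w, T x₀⟩ T x₀`. -/
theorem equipotential_distortion_eq_tangential_log_gradient
    {n : ℕ} (f : EuclideanSpace ℝ (Fin n) → ℝ) (hf : ContDiff ℝ 2 f)
    (x₀ : EuclideanSpace ℝ (Fin n)) (hx₀ : gradient f x₀ ≠ 0)
    (w : EuclideanSpace ℝ (Fin n))
    (hw : HasGradientAt (fun y => Real.log ‖gradient f y‖) w x₀) :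
    HasLineDerivAt ℝ (fun y => ‖gradient f y‖⁻¹ • gradient f y)
      (w - ⟪w, ‖gradient f x₀‖⁻¹ • gradient f x₀⟫ • (‖gradient f x₀‖⁻¹ • gradient f x₀))
      x₀ (‖gradient f x₀‖⁻¹ • gradient f x₀) := by
  have hf₂ : ContDiffAt ℝ 2 f x₀ := hf.contDiffAt
  have hH := hf₂.differentiableAt_gradient.hasFDerivAt
  have hw_eq : w = ‖gradient f x₀‖⁻¹ •
      fderiv ℝ (gradient f) x₀ (‖gradient f x₀‖⁻¹ • gradient f x₀) := by
    rw [hw.unique (hH.hasGradientAt_log_norm hf₂.isSymmetric_fderiv_gradient hx₀), map_smul,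
      smul_smul, ← mul_inv, ← pow_two]
  rw [hw_eq]
  exact hH.hasLineDerivAt_inv_norm_smul hx₀ _
end
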